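/- Let k ≥ 3 be an integer, A = ℤ/2^k ℤ ⊕ ℤ/2ℤ, and H = {±(1,0), ±(2^{k−2},0), ±(2^{k−2},1), ±(2^{k−1}−1,0)}. Then H is a nonseparating subset of A. -/

import Mathlib

def middleTwoEq (c : Fin 4 → ℕ) : Prop :=
  (Multiset.sort ({c 0, c 1, c 2, c 3} : Multiset ℕ) (· ≤ ·)).getD 1 0 =
  (Multiset.sort ({c 0, c 1, c 2, c 3} : Multiset ℕ) (· ≤ ·)).getD 2 0

/-- `c` is the coset number of the pair `{x, -x}` relative to `B` and the
generator `a + B` of `A ⧸ B`: `0 ≤ c ≤ n/2` and `(c • a + B) ∩ {x, -x} ≠ ∅`. -/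
def IsCosetNum {A : Type*} [AddCommGroup A] (B : AddSubgroup A) (a x : A) (c : ℕ) : Prop :=
  c ≤ Nat.card (A ⧸ B) / 2 ∧ (x - c • a ∈ B ∨ x + c • a ∈ B)

/-- The four pairs `{± h i}` are disjoint and for every cyclic subgroup `B` with
cyclic quotient and every generator of the quotient, the middle two of the four
coset numbers agree. -/
def NonsepTuple {A : Type*} [AddCommGroup A] (h : Fin 4 → A) : Prop :=
  (∀ i j : Fin 4, i ≠ j → h i ≠ h j ∧ h i ≠ -h j) ∧
  ∀ B : AddSubgroup A, IsAddCyclic B → IsAddCyclic (A ⧸ B) →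
    ∀ a : A, (∀ x : A ⧸ B, x ∈ AddSubgroup.zmultiples ((QuotientAddGroup.mk a : A ⧸ B))) →
      ∀ c : Fin 4 → ℕ, (∀ i, IsCosetNum B a (h i) (c i)) → middleTwoEq c

/-- `H` is a nonseparating subset of `A`. -/
def IsNonseparating {A : Type*} [AddCommGroup A] (H : Set A) : Prop :=
  ∃ h : Fin 4 → A, H = (⋃ i, {h i, -h i}) ∧ NonsepTuple h

/-!
Identify `A ⧸ B` with `ZMod n` by sending the generator `a + B` to `1`. The coset number of
`{±x}` becomes `|valMinAbs (ψ x)|` for the induced map `ψ : A → ZMod n`, which is determined by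
`u = ψ (1, 0)` and `v = ψ (0, 1)`; here `2v = 0`, `u` and `v` generate `ZMod n`, and `n ∣ 2^k`.
With `P = 2^(k-2)` the four pairs map to `±u`, `±Pu`, `±(Pu + v)`, `±(2P - 1)u`.

If `n ∣ 2P`, then `(2P - 1)u = -u`, so the outer coset numbers agree. Since `B` is cyclic it
cannot contain both involutions `(2P, 0)` and `(0, 1)`, so `v` is the involution `n/2` of
`ZMod n`, and `Pu` is `0` or `v`: the other two coset numbers are `0` and `n/2`.

If `n = 4P`, then `2Pu` is `0` or `2P`, and it is not `0` since `2P` does not annihilate the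
group `ZMod n` generated by `u` and `v`. Hence `Pu = ±P` and `Pu + v = ±P`, so the middle coset
numbers are both `P`, while `(2P - 1)u = 2P - u` makes the outer ones `c` and `2P - c`.
-/

lemma middleTwoEq_of_multiset_eq {c : Fin 4 → ℕ} {p v q : ℕ}
    (hc : ({c 0, c 1, c 2, c 3} : Multiset ℕ) = {p, v, v, q}) (hpv : p ≤ v) (hvq : v ≤ q) :
    middleTwoEq c := by
  have hsort : Multiset.sort ({p, v, v, q} : Multiset ℕ) (· ≤ ·) = [p, v, v, q] := by
    change Multiset.sort (([p, v, v, q] : List ℕ) : Multiset ℕ) _ = _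
    rw [Multiset.coe_sort]
    exact List.mergeSort_eq_self _ (by simp [hpv, hvq, hpv.trans hvq])
  unfold middleTwoEq
  rw [hc, hsort]
  rfl

lemma middleTwoEq_of_one_eq_two {c : Fin 4 → ℕ} (h12 : c 1 = c 2)
    (hlo : min (c 0) (c 3) ≤ c 1) (hhi : c 1 ≤ max (c 0) (c 3)) : middleTwoEq c := by
  rcases le_total (c 0) (c 3) with h | h
  · exact middleTwoEq_of_multiset_eq (p := c 0) (v := c 1) (q := c 3) (by simp [h12])
      (by omega) (by omega)
  · refine middleTwoEq_of_multiset_eq (p := c 3) (v := c 1) (q := c 0) ?_ (by omega) (by omega)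
    simp only [Multiset.insert_eq_cons, ← Multiset.singleton_add, h12]; abel

lemma middleTwoEq_of_zero_eq_three {c : Fin 4 → ℕ} (h03 : c 0 = c 3)
    (hlo : min (c 1) (c 2) ≤ c 0) (hhi : c 0 ≤ max (c 1) (c 2)) : middleTwoEq c := by
  rcases le_total (c 1) (c 2) with h | h
  · refine middleTwoEq_of_multiset_eq (p := c 1) (v := c 0) (q := c 2) ?_ (by omega) (by omega)
    simp only [Multiset.insert_eq_cons, ← Multiset.singleton_add, h03]; abel
  · refine middleTwoEq_of_multiset_eq (p := c 2) (v := c 0) (q := c 1) ?_ (by omega) (by omega)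
    simp only [Multiset.insert_eq_cons, ← Multiset.singleton_add, h03]; abel

namespace ZMod

lemma natAbs_valMinAbs_eq_of_eq_or_eq_neg {n : ℕ} {x : ZMod n} {c : ℕ} (hc : c ≤ n / 2)
    (hx : x = c ∨ x = -c) : x.valMinAbs.natAbs = c := by
  rcases hx with rfl | rfl
  · simp [valMinAbs_natCast_of_le_half hc]
  · simp [valMinAbs_natCast_of_le_half hc]

lemma four_mul_eq_zero {n P : ℕ} (hn : n = 4 * P) : (4 * P : ZMod n) = 0 := by
  have : ((4 * P : ℕ) : ZMod n) = 0 := by rw [← hn]; exact natCast_self n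
  exact_mod_cast this

variable {n : ℕ} [NeZero n]

lemma eq_natAbs_valMinAbs_or_eq_neg (x : ZMod n) :
    x = x.valMinAbs.natAbs ∨ x = -(x.valMinAbs.natAbs : ZMod n) := by
  rw [natCast_natAbs_valMinAbs]
  split_ifs <;> simp

lemma eq_zero_or_eq_half_of_add_self_eq_zero {x : ZMod n} (hx : x + x = 0) :
    x = 0 ∨ x = (n / 2 : ℕ) := by
  obtain ⟨q, hq⟩ : n ∣ x.val + x.val := by
    rw [← natCast_eq_zero_iff, Nat.cast_add, natCast_zmod_val, hx]
  have hlt := x.val_lt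
  obtain rfl | rfl : q = 0 ∨ q = 1 := by
    have : q < 2 := by nlinarith
    omega
  · left; rw [← val_eq_zero]; omega
  · right; rw [← natCast_zmod_val x]; congr 1; omega

end ZMod

lemma IsAddCyclic.eq_of_add_self_eq_zero {G : Type*} [AddCommGroup G] [Finite G] [IsAddCyclic G]
    {x y : G} (hx : x + x = 0) (hy : y + y = 0) (hx0 : x ≠ 0) (hy0 : y ≠ 0) : x = y := by
  let e := (zmodAddCyclicAddEquiv (inferInstance : IsAddCyclic G)).symm
  have : NeZero (Nat.card G) := ⟨Nat.card_pos.ne'⟩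
  have half : ∀ z : G, z + z = 0 → z ≠ 0 → e z = (Nat.card G / 2 : ℕ) := fun z hz hz0 =>
    (ZMod.eq_zero_or_eq_half_of_add_self_eq_zero (by rw [← map_add, hz, map_zero])).resolve_left
      (by simpa using hz0)
  exact e.injective ((half x hx hx0).trans (half y hy hy0).symm)

section CosetNumbers
open ZMod
variable {n : ℕ} [NeZero n]

lemma middleTwoEq_of_add_self_eq_zero (u w v : ZMod n) (hw : w + w = 0) (hv : v + v = 0)
    (hv0 : v ≠ 0) :
    middleTwoEq ![u.valMinAbs.natAbs, w.valMinAbs.natAbs, (w + v).valMinAbs.natAbs,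
      (-u).valMinAbs.natAbs] := by
  have hv_eq : v = (n / 2 : ℕ) := (eq_zero_or_eq_half_of_add_self_eq_zero hv).resolve_left hv0
  have hfv : v.valMinAbs.natAbs = n / 2 :=
    natAbs_valMinAbs_eq_of_eq_or_eq_neg le_rfl (Or.inl hv_eq)
  have hfu := natAbs_valMinAbs_le u
  refine middleTwoEq_of_zero_eq_three (by simp) ?_ ?_
  all_goals
    rcases eq_zero_or_eq_half_of_add_self_eq_zero hw with rfl | hw_eq
    · simp [hfv, hfu]
    · obtain rfl : w = v := hw_eq.trans hv_eq.symm
      simp [hv, hfv, hfu]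

lemma two_mul_mul_eq_of_mul_add_mul_eq_one {P : ℕ} (hn : n = 4 * P) {u v : ZMod n}
    (hv : v + v = 0) (hgen : ∃ s t : ℤ, s * u + t * v = 1) : 2 * P * u = 2 * P := by
  have h4P := four_mul_eq_zero hn
  have hne : (2 * P : ZMod n) ≠ 0 := by
    have := NeZero.ne n
    rw [← Nat.cast_ofNat, ← Nat.cast_mul, Ne, natCast_eq_zero_iff]
    exact fun h => by have := Nat.le_of_dvd (by omega) h; omega
  rcases eq_zero_or_eq_half_of_add_self_eq_zero (x := 2 * (P : ZMod n) * u)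
    (by linear_combination u * h4P) with h0 | h
  · obtain ⟨s, t, hst⟩ := hgen
    refine absurd ?_ hne
    linear_combination (-2 * P : ZMod n) * hst + s * h0 + t * P * hv
  · rw [h]
    push_cast [show n / 2 = 2 * P by omega]
    ring

lemma middleTwoEq_of_eq_four_mul {P : ℕ} (hn : n = 4 * P) (u v : ZMod n) (hv : v + v = 0)
    (hgen : ∃ s t : ℤ, s * u + t * v = 1) :
    middleTwoEq ![u.valMinAbs.natAbs, (P * u).valMinAbs.natAbs, (P * u + v).valMinAbs.natAbs,
      ((2 * P - 1) * u).valMinAbs.natAbs] := by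
  have h4P := four_mul_eq_zero hn
  have hhalf : n / 2 = 2 * P := by omega
  have h2Pu := two_mul_mul_eq_of_mul_add_mul_eq_one hn hv hgen
  have hv' : v = 0 ∨ v = 2 * P := by
    simpa [hhalf] using eq_zero_or_eq_half_of_add_self_eq_zero hv
  have hPu : P * u = P ∨ P * u = -P := by
    rcases eq_zero_or_eq_half_of_add_self_eq_zero (x := (P : ZMod n) * u - (P : ZMod n))
      (by linear_combination h2Pu) with h | h
    · exact Or.inl (by linear_combination h)
    · refine Or.inr ?_
      push_cast [hhalf] at h
      linear_combination h + h4P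
  have hc1 : (P * u).valMinAbs.natAbs = P := natAbs_valMinAbs_eq_of_eq_or_eq_neg (by omega) hPu
  have hc2 : (P * u + v).valMinAbs.natAbs = P := by
    refine natAbs_valMinAbs_eq_of_eq_or_eq_neg (by omega) ?_
    rcases hv' with hv' | hv' <;> rcases hPu with h | h <;> rw [hv', h]
    · simp
    · simp
    · right; linear_combination h4P
    · left; ring
  set d := u.valMinAbs.natAbs with hd
  have hdle : d ≤ 2 * P := hhalf ▸ natAbs_valMinAbs_le u
  have hc3 : ((2 * P - 1) * u).valMinAbs.natAbs = 2 * P - d := by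
    refine natAbs_valMinAbs_eq_of_eq_or_eq_neg (by omega) ?_
    push_cast [Nat.cast_sub hdle]
    rcases eq_natAbs_valMinAbs_or_eq_neg u with h | h <;> rw [← hd] at h
    · left; linear_combination h2Pu - h
    · right; linear_combination h2Pu + h4P - h
  refine middleTwoEq_of_one_eq_two ?_ ?_ ?_ <;>
    simp only [hc1, hc2, hc3, Matrix.cons_val_zero, Matrix.cons_val_one, Matrix.cons_val] <;> omega

end CosetNumbers

section QuotientToZMod
variable {A : Type*} [AddCommGroup A] {B : AddSubgroup A} {a : A}
  (ha : ∀ x : A ⧸ B, x ∈ AddSubgroup.zmultiples (QuotientAddGroup.mk a : A ⧸ B))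

noncomputable def quotientToZMod : A →+ ZMod (Nat.card (A ⧸ B)) :=
  (zmodAddEquivOfGenerator ha rfl).symm.toAddMonoidHom.comp (QuotientAddGroup.mk' B)

lemma quotientToZMod_apply_generator : quotientToZMod ha a = 1 := by
  simp [quotientToZMod]

lemma quotientToZMod_eq_zero_iff {x : A} : quotientToZMod ha x = 0 ↔ x ∈ B := by
  simp [quotientToZMod]

lemma IsCosetNum.eq_natAbs_valMinAbs {x : A} {c : ℕ} (hc : IsCosetNum B a x c) :
    c = (quotientToZMod ha x).valMinAbs.natAbs := by
  refine (ZMod.natAbs_valMinAbs_eq_of_eq_or_eq_neg hc.1 ?_).symm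
  have hψ := quotientToZMod_apply_generator ha
  rcases hc.2 with h | h <;> have h0 := (quotientToZMod_eq_zero_iff ha).2 h
  · left
    simpa [hψ, sub_eq_zero] using h0
  · right
    simp only [map_add, map_nsmul, hψ, nsmul_eq_mul, mul_one] at h0
    exact eq_neg_of_add_eq_zero_left h0

end QuotientToZMod

section PairReps
variable {k : ℕ}

def pairReps (k : ℕ) : Fin 4 → ZMod (2 ^ k) × ZMod 2 :=
  ![(1, 0), (2 ^ (k - 2), 0), (2 ^ (k - 2), 1), (2 ^ (k - 1) - 1, 0)]

lemma pairReps_ne (hk : 3 ≤ k) (i j : Fin 4) (hij : i ≠ j) :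
    pairReps k i ≠ pairReps k j ∧ pairReps k i ≠ -pairReps k j := by
  have hk1 : 2 ^ (k - 1) = 2 * 2 ^ (k - 2) := by rw [← pow_succ']; congr 1; omega
  have hk2 : 2 ^ k = 4 * 2 ^ (k - 2) := by rw [show 4 = 2 ^ 2 by rfl, ← pow_add]; congr 1; omega
  have hP : 2 ≤ 2 ^ (k - 2) := Nat.le_self_pow (by omega) 2
  have hf : ∀ m : ℕ, m ≤ 2 ^ k / 2 → (m : ZMod (2 ^ k)).valMinAbs.natAbs = m := fun m hm =>
    ZMod.natAbs_valMinAbs_eq_of_eq_or_eq_neg hm (Or.inl rfl)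
  have hf0 := hf 1 (by omega)
  have hf1 := hf (2 ^ (k - 2)) (by omega)
  have hf3 := hf (2 ^ (k - 1) - 1) (by omega)
  push_cast [Nat.cast_sub Nat.one_le_two_pow] at hf0 hf1 hf3
  have of_fst : ∀ p q : ZMod (2 ^ k) × ZMod 2,
      p.1.valMinAbs.natAbs ≠ q.1.valMinAbs.natAbs → p ≠ q ∧ p ≠ -q := fun p q h =>
    ⟨by rintro rfl; exact h rfl, by rintro rfl; simp at h⟩
  have of_snd : ∀ p q : ZMod (2 ^ k) × ZMod 2,
      p.2 ≠ q.2 → p.2 ≠ -q.2 → p ≠ q ∧ p ≠ -q :=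
    fun p q h h' => ⟨fun e => h (congrArg Prod.snd e), fun e => h' (congrArg Prod.snd e)⟩
  fin_cases i <;> fin_cases j
  all_goals first
    | exact absurd rfl hij
    | (apply of_snd <;> simp [pairReps]; done)
    | (apply of_fst
       simp only [pairReps, Fin.zero_eta, Fin.mk_one, Fin.reduceFinMk, Matrix.cons_val_zero,
         Matrix.cons_val_one, Matrix.cons_val, hf0, hf1, hf3]
       omega)

lemma not_mem_and_mem_of_isAddCyclic (hk : 1 ≤ k) (B : AddSubgroup (ZMod (2 ^ k) × ZMod 2))
    [IsAddCyclic B] : ¬ ((2 ^ (k - 1), 0) ∈ B ∧ (0, 1) ∈ B) := by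
  rintro ⟨hx, hy⟩
  have h2k : (2 ^ (k - 1) + 2 ^ (k - 1) : ZMod (2 ^ k)) = 0 := by
    rw [← two_mul, ← pow_succ', Nat.sub_add_cancel hk]
    exact_mod_cast ZMod.natCast_self (2 ^ k)
  have hne : (2 ^ (k - 1) : ZMod (2 ^ k)) ≠ 0 := by
    have := Nat.pow_lt_pow_right (a := 2) (by norm_num) (Nat.sub_lt hk one_pos)
    exact_mod_cast (ZMod.natCast_eq_zero_iff _ _).not.2
      (Nat.not_dvd_of_pos_of_lt (by positivity) this)
  have := IsAddCyclic.eq_of_add_self_eq_zero (x := (⟨_, hx⟩ : B)) (y := ⟨_, hy⟩)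
    (Subtype.ext (Prod.ext h2k rfl)) (Subtype.ext (Prod.ext (add_zero 0) rfl))
    (fun h => hne (congrArg (fun z : B => z.1.1) h))
    (fun h => by simpa using congrArg (fun z : B => z.1.2) h)
  simpa using congrArg (fun z : B => z.1.2) this

section Hom
variable {n : ℕ} (ψ : ZMod (2 ^ k) × ZMod 2 →+ ZMod n)

lemma map_intCast_zero_eq_mul (z : ℤ) : ψ (z, 0) = z * ψ (1, 0) := by
  rw [← zsmul_eq_mul, ← map_zsmul]; simp

lemma exists_mul_add_mul_eq_one {a : ZMod (2 ^ k) × ZMod 2} (ha : ψ a = 1) :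
    ∃ s t : ℤ, s * ψ (1, 0) + t * ψ (0, 1) = 1 := by
  refine ⟨a.1.cast, a.2.cast, ?_⟩
  rw [← zsmul_eq_mul, ← zsmul_eq_mul, ← map_zsmul, ← map_zsmul, ← map_add, ← ha]
  congr 1
  ext <;> simp

lemma dvd_two_pow_of_map_eq_one (hk : 1 ≤ k) {a : ZMod (2 ^ k) × ZMod 2} (ha : ψ a = 1) :
    n ∣ 2 ^ k := by
  have h2ka : (2 ^ k : ℕ) • a = 0 := Prod.ext
    (by rw [Prod.smul_fst, nsmul_eq_mul, ZMod.natCast_self, zero_mul]; rfl)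
    (by rw [Prod.smul_snd, nsmul_eq_mul,
      (ZMod.natCast_eq_zero_iff _ _).2 (dvd_pow_self 2 (by omega)), zero_mul]; rfl)
  rw [← ZMod.natCast_eq_zero_iff, ← mul_one ((2 ^ k : ℕ) : ZMod n), ← ha, ← nsmul_eq_mul,
    ← map_nsmul, h2ka, map_zero]

lemma map_pairReps (hk : 2 ≤ k) (i : Fin 4) : ψ (pairReps k i) = ![ψ (1, 0),
    2 ^ (k - 2) * ψ (1, 0), 2 ^ (k - 2) * ψ (1, 0) + ψ (0, 1),
    (2 * 2 ^ (k - 2) - 1) * ψ (1, 0)] i := by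
  have hpow : (2 : ZMod n) ^ (k - 1) = 2 * 2 ^ (k - 2) := by
    rw [← pow_succ']; congr 1; omega
  have h1 : ψ (pairReps k 1) = 2 ^ (k - 2) * ψ (1, 0) := by
    simpa [pairReps] using map_intCast_zero_eq_mul ψ (2 ^ (k - 2))
  fin_cases i
  · rfl
  · exact h1
  · rw [← h1, ← map_add]; congr 1; ext <;> simp [pairReps]
  · simpa [pairReps, hpow] using map_intCast_zero_eq_mul ψ (2 ^ (k - 1) - 1)

lemma middleTwoEq_natAbs_valMinAbs_map_pairReps [NeZero n] (hk : 3 ≤ k)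
    {a : ZMod (2 ^ k) × ZMod 2} (ha : ψ a = 1)
    (hker : ψ (2 ^ (k - 1), 0) = 0 → ψ (0, 1) ≠ 0) :
    middleTwoEq fun i => (ψ (pairReps k i)).valMinAbs.natAbs := by
  set u := ψ (1, 0)
  set v := ψ (0, 1)
  have hv : v + v = 0 := by
    rw [← map_add, ← map_zero ψ]; exact congrArg ψ (Prod.ext (add_zero 0) rfl)
  have hpow : (2 : ZMod n) ^ (k - 1) = 2 * 2 ^ (k - 2) := by
    rw [← pow_succ']; congr 1; omega
  have hc : (fun i => (ψ (pairReps k i)).valMinAbs.natAbs) = ![u.valMinAbs.natAbs,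
      (2 ^ (k - 2) * u).valMinAbs.natAbs, (2 ^ (k - 2) * u + v).valMinAbs.natAbs,
      ((2 * 2 ^ (k - 2) - 1) * u).valMinAbs.natAbs] := by
    funext i
    rw [map_pairReps ψ (by omega) i]
    fin_cases i <;> rfl
  obtain ⟨m, hmk, hnm⟩ :=
    (Nat.dvd_prime_pow Nat.prime_two).1 (dvd_two_pow_of_map_eq_one ψ (by omega) ha)
  rw [hc]
  rcases hmk.lt_or_eq with hmk | hmk
  · have h2P : (2 * 2 ^ (k - 2) : ZMod n) = 0 := by
      have := (ZMod.natCast_eq_zero_iff _ n).2 (hnm ▸ pow_dvd_pow 2 (Nat.le_sub_one_of_lt hmk))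
      push_cast [hpow] at this
      exact this
    have hv0 : v ≠ 0 := hker (by simpa [hpow, h2P] using map_intCast_zero_eq_mul ψ (2 ^ (k - 1)))
    rw [show (2 * 2 ^ (k - 2) - 1) * u = -u by linear_combination u * h2P]
    exact middleTwoEq_of_add_self_eq_zero u _ v (by linear_combination u * h2P) hv hv0
  · have hn4 : n = 4 * 2 ^ (k - 2) := by
      rw [hnm, hmk, show 4 = 2 ^ 2 by rfl, ← pow_add]; congr 1; omega
    simpa using middleTwoEq_of_eq_four_mul hn4 u v hv (exists_mul_add_mul_eq_one ψ ha)

end Hom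

end PairReps

/-- For `k ≥ 3`, `H = {±(1,0), ±(2^(k-2),0), ±(2^(k-2),1), ±(2^(k-1)-1,0)}` is a
nonseparating subset of `ℤ/2^kℤ ⊕ ℤ/2ℤ`. -/
theorem stmt_12 (k : ℕ) (hk : 3 ≤ k) :
    IsNonseparating ({(1, 0), -(1, 0), (2 ^ (k - 2), 0), -(2 ^ (k - 2), 0),
      (2 ^ (k - 2), 1), -(2 ^ (k - 2), 1), (2 ^ (k - 1) - 1, 0), -(2 ^ (k - 1) - 1, 0)} :
      Set (ZMod (2 ^ k) × ZMod 2)) := by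
  refine ⟨pairReps k, ?_, pairReps_ne hk, fun B _ _ a ha c hc => ?_⟩
  · ext z
    simp [pairReps, Fin.exists_fin_succ, or_assoc]
  · have : NeZero (Nat.card (_ ⧸ B)) := ⟨Nat.card_pos.ne'⟩
    obtain rfl : c = fun i => (quotientToZMod ha (pairReps k i)).valMinAbs.natAbs :=
      funext fun i => (hc i).eq_natAbs_valMinAbs ha
    exact middleTwoEq_natAbs_valMinAbs_map_pairReps _ hk (quotientToZMod_apply_generator ha)
      fun h1 h2 => not_mem_and_mem_of_isAddCyclic (by omega) B
        ⟨(quotientToZMod_eq_zero_iff ha).1 h1, (quotientToZMod_eq_zero_iff ha).1 h2⟩
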